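/- Let A : ℝ^d → ℝ^d be an orthogonal projection (a linear map with A ∘ A = A and A self-adjoint), let F : ℝ^d → ℝ be continuous and bounded, define f = F ∘ A, let δ > 0, and define the smoothed function f̂(w) = E_{v ~ Unif(B^d)}[f(w + δ v)]. Then for every w ∈ ℝ^d at which f̂ is differentiable, A(∇f̂(w)) = ∇f̂(w); that is, the gradient of the smoothed loss lies in the range of A. -/

import Mathlib

/-!
Since `f = F ∘ A` only sees `A x`, the smoothed function `f̂` is invariant under translations
by `ker A`, so its derivative at `w` vanishes on `ker A`. The gradient is therefore orthogonal
to `ker A`, and for an orthogonal projection `(ker A)ᗮ = range A`.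
-/

open MeasureTheory Metric
open scoped RealInnerProductSpace

/-- The uniform (normalized Lebesgue) probability measure on the closed unit ball
of `ℝ^d`. -/
noncomputable def ballUniform (d : ℕ) : Measure (EuclideanSpace ℝ (Fin d)) :=
  (volume (closedBall (0 : EuclideanSpace ℝ (Fin d)) 1))⁻¹ •
    volume.restrict (closedBall (0 : EuclideanSpace ℝ (Fin d)) 1)

/-- The smoothed function `f̂(w) = 𝔼_{v ~ Unif(B^d)}[f (w + δ v)]`. -/
noncomputable def smoothed (d : ℕ) (δ : ℝ) (f : EuclideanSpace ℝ (Fin d) → ℝ)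
    (w : EuclideanSpace ℝ (Fin d)) : ℝ :=
  ∫ v, f (w + δ • v) ∂(ballUniform d)

theorem HasFDerivAt.apply_eq_zero_of_forall_add_smul {E F : Type*} [NormedAddCommGroup E]
    [NormedSpace ℝ E] [NormedAddCommGroup F] [NormedSpace ℝ F] {f : E → F} {f' : E →L[ℝ] F}
    {w u : E} (hf : HasFDerivAt f f' w) (hconst : ∀ t : ℝ, f (w + t • u) = f w) : f' u = 0 := by
  have hline : HasDerivAt (fun t : ℝ => w + t • u) u 0 := by
    simpa using ((hasDerivAt_id (0 : ℝ)).smul_const u).const_add w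
  have hcomp : HasDerivAt (fun t : ℝ => f (w + t • u)) (f' u) 0 :=
    (by simpa using hf : HasFDerivAt f f' (w + (0 : ℝ) • u)).comp_hasDerivAt 0 hline
  rw [funext hconst] at hcomp
  exact hcomp.unique (hasDerivAt_const 0 (f w))

theorem smoothed_add_of_forall_add_eq {d : ℕ} {δ : ℝ} {f : EuclideanSpace ℝ (Fin d) → ℝ}
    {u : EuclideanSpace ℝ (Fin d)} (hf : ∀ x, f (x + u) = f x) (w : EuclideanSpace ℝ (Fin d)) :
    smoothed d δ f (w + u) = smoothed d δ f w := by
  unfold smoothed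
  congr 1 with v
  rw [add_right_comm, hf]

theorem LinearMap.apply_eq_self_of_inner_eq_zero_of_map_eq_zero {E : Type*}
    [NormedAddCommGroup E] [InnerProductSpace ℝ E] {A : E →ₗ[ℝ] E} (hidem : A ∘ₗ A = A)
    (hsa : ∀ x y : E, ⟪A x, y⟫ = ⟪x, A y⟫) {g : E} (hg : ∀ v, A v = 0 → ⟪g, v⟫ = 0) :
    A g = g := by
  refine ext_inner_right ℝ fun x => ?_
  have hker : A (x - A x) = 0 := by
    rw [map_sub, ← LinearMap.comp_apply, hidem, sub_self]
  calc ⟪A g, x⟫ = ⟪g, A x⟫ := hsa g x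
    _ = ⟪g, x⟫ - ⟪g, x - A x⟫ := by rw [inner_sub_right, sub_sub_cancel]
    _ = ⟪g, x⟫ := by rw [hg _ hker, sub_zero]

theorem orthogonalProjection_gradient_smoothed_comp_general
    (d : ℕ)
    (A : EuclideanSpace ℝ (Fin d) →ₗ[ℝ] EuclideanSpace ℝ (Fin d))
    (hidem : A ∘ₗ A = A)
    (hsa : ∀ x y : EuclideanSpace ℝ (Fin d), ⟪A x, y⟫ = ⟪x, A y⟫)
    (F : EuclideanSpace ℝ (Fin d) → ℝ)
    (δ : ℝ)
    (w : EuclideanSpace ℝ (Fin d))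
    (hdiff : DifferentiableAt ℝ (smoothed d δ (F ∘ A)) w) :
    A (gradient (smoothed d δ (F ∘ A)) w) = gradient (smoothed d δ (F ∘ A)) w := by
  refine LinearMap.apply_eq_self_of_inner_eq_zero_of_map_eq_zero hidem hsa fun v hv => ?_
  have hinv : ∀ t : ℝ, smoothed d δ (F ∘ A) (w + t • v) = smoothed d δ (F ∘ A) w :=
    fun t => smoothed_add_of_forall_add_eq (fun x => by simp [hv]) w
  exact hdiff.hasGradientAt.hasFDerivAt.apply_eq_zero_of_forall_add_smul hinv

/-- **The gradient of the smoothed projected loss lies in the range of the projection.**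
If `A` is an orthogonal projection of `ℝ^d`, `F` is continuous and bounded,
`f = F ∘ A`, and `f̂` is the ball-smoothed version of `f`, then at every point `w`
where `f̂` is differentiable, `A (∇ f̂ (w)) = ∇ f̂ (w)`. -/
theorem orthogonalProjection_gradient_smoothed_comp
    (d : ℕ)
    (A : EuclideanSpace ℝ (Fin d) →ₗ[ℝ] EuclideanSpace ℝ (Fin d))
    (hidem : A ∘ₗ A = A)
    (hsa : ∀ x y : EuclideanSpace ℝ (Fin d), ⟪A x, y⟫ = ⟪x, A y⟫)
    (F : EuclideanSpace ℝ (Fin d) → ℝ) (hFcont : Continuous F)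
    (C : ℝ) (hFbdd : ∀ x, |F x| ≤ C)
    (δ : ℝ) (hδ : 0 < δ)
    (w : EuclideanSpace ℝ (Fin d))
    (hdiff : DifferentiableAt ℝ (smoothed d δ (F ∘ A)) w) :
    A (gradient (smoothed d δ (F ∘ A)) w) = gradient (smoothed d δ (F ∘ A)) w :=
  orthogonalProjection_gradient_smoothed_comp_general d A hidem hsa F δ w hdiff
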